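/- arXiv:1512.06331 — 2 statements merged into one kernel-verified Lean document; each statement's English description precedes it below -/
import Mathlib

section
/- There exists a constant C > 0 depending only on the dimension n such that the following holds. Let φ : ℝⁿ → ℝ be a measurable function that is 1-periodic in each coordinate (i.e. φ(x + e_i) = φ(x) for every x ∈ ℝⁿ and every standard basis vector e_i) and bounded, with |φ(x)| ≤ M for all x. Then for every 0 < ε ≤ δ and every x₀ ∈ ℝⁿ, writing K_δ for the cube x₀ + [0, δ]ⁿ, one has | δ^{-n} ∫_{K_δ} φ(x/ε) dx − ∫_{[0,1]ⁿ} φ(y) dy | ≤ C · M · (ε/δ). -/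
/-!
Substituting `y = x / ε` turns the average over `K_δ` into the average of `φ` over a cube of side
`L = δ / ε`. By periodicity every integer translate of `[0,1)ⁿ` is a fundamental domain of `ℤⁿ`
carrying the same integral `I` of `φ`, and the cube contains `⌊L⌋ⁿ` disjoint such translates. The
rest of the cube has volume `Lⁿ - ⌊L⌋ⁿ`, so the integral over the cube differs from `Lⁿ I` by at
most `2M (Lⁿ - ⌊L⌋ⁿ)`, and Bernoulli's inequality bounds `1 - (⌊L⌋ / L)ⁿ` by `n / L = n ε / δ`.
-/
open MeasureTheory Set Function
open scoped Pointwise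

variable {ι : Type*}

abbrev unitLattice (ι : Type*) [Finite ι] : AddSubgroup (ι → ℝ) :=
  (Submodule.span ℤ (range (Pi.basisFun ℝ ι))).toAddSubgroup

-- Not found by instance search through `Submodule.toAddSubgroup`.
instance [Finite ι] : Countable (unitLattice ι) :=
  inferInstanceAs (Countable (Submodule.span ℤ (range (Pi.basisFun ℝ ι))))

def unitCell (c : ι → ℝ) : Set (ι → ℝ) := univ.pi fun i => Ico (c i) (c i + 1)

lemma measurableSet_unitCell [Countable ι] (c : ι → ℝ) : MeasurableSet (unitCell c) :=
  MeasurableSet.univ_pi fun _ => measurableSet_Ico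

lemma vadd_unitCell (c d : ι → ℝ) : c +ᵥ unitCell d = unitCell (c + d) := by
  ext x
  simp only [mem_vadd_set_iff_neg_vadd_mem, unitCell, mem_pi, mem_univ, mem_Ico, vadd_eq_add,
    Pi.add_apply, Pi.neg_apply, true_implies]
  refine forall_congr' fun i => ?_
  constructor <;> rintro ⟨h₁, h₂⟩ <;> constructor <;> linarith

lemma apply_unitLattice_vadd [Finite ι] [DecidableEq ι] {α : Type*} {f : (ι → ℝ) → α}
    (hf : ∀ i, Periodic f (Pi.single i 1)) (g : unitLattice ι) (x : ι → ℝ) : f (g +ᵥ x) = f x := by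
  obtain ⟨v, hv⟩ := g
  suffices Periodic f v by rw [AddSubgroup.vadd_def, vadd_eq_add, add_comm]; exact this x
  induction hv using Submodule.span_induction with
  | mem _ hv => obtain ⟨i, rfl⟩ := hv; simpa using hf i
  | zero => exact fun x => by rw [add_zero]
  | add _ _ _ _ hu hw => exact hu.add_period hw
  | smul k _ _ hu => exact hu.zsmul k

lemma isAddFundamentalDomain_unitCell [Fintype ι] (c : ι → ℝ) :
    IsAddFundamentalDomain (unitLattice ι) (unitCell c) volume := by
  have h₀ := ZSpan.isAddFundamentalDomain' (Pi.basisFun ℝ ι) volume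
  rw [ZSpan.fundamentalDomain_pi_basisFun, show univ.pi (fun _ => Ico (0 : ℝ) 1) = unitCell 0 by
    simp [unitCell]] at h₀
  simpa [vadd_unitCell] using h₀.vadd_of_comm c

lemma Ico_add_natCast_eq_iUnion (b : ℝ) (m : ℕ) :
    Ico b (b + m) = ⋃ j : Fin m, Ico (b + (j : ℕ)) (b + (j : ℕ) + 1) := by
  ext x
  simp only [mem_Ico, mem_iUnion]
  constructor
  · rintro ⟨hbx, hxm⟩
    have h₀ : 0 ≤ x - b := by linarith
    refine ⟨⟨⌊x - b⌋₊, (Nat.floor_lt h₀).2 (by linarith)⟩, ?_, ?_⟩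
    · linarith [Nat.floor_le h₀]
    · linarith [Nat.lt_floor_add_one (x - b)]
  · rintro ⟨j, hj₁, hj₂⟩
    have : ((j : ℕ) : ℝ) + 1 ≤ m := by exact_mod_cast j.2
    constructor <;> linarith [(Nat.cast_nonneg (j : ℕ) : (0 : ℝ) ≤ (j : ℕ))]

lemma pairwise_disjoint_Ico_add_natCast (b : ℝ) (m : ℕ) :
    Pairwise (Disjoint on fun j : Fin m => Ico (b + (j : ℕ)) (b + (j : ℕ) + 1)) := by
  intro j k hjk
  simpa using pairwise_disjoint_Ico_add_intCast b
    (by simpa [Fin.ext_iff] using hjk : ((j : ℕ) : ℤ) ≠ (k : ℕ))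

lemma pi_Ico_natCast_eq_iUnion_unitCell (a : ι → ℝ) (m : ℕ) :
    univ.pi (fun i => Ico (a i) (a i + m)) = ⋃ k : ι → Fin m, unitCell fun i => a i + (k i : ℕ) := by
  simp_rw [Ico_add_natCast_eq_iUnion, ← iUnion_univ_pi]
  rfl

lemma pairwise_disjoint_unitCell_add_natCast (a : ι → ℝ) (m : ℕ) :
    Pairwise (Disjoint on fun k : ι → Fin m => unitCell fun i => a i + (k i : ℕ)) := by
  intro k l hkl
  obtain ⟨i, hi⟩ := Function.ne_iff.1 hkl
  exact disjoint_univ_pi.2 ⟨i, pairwise_disjoint_Ico_add_natCast (a i) m hi⟩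

section Periodic

variable [Fintype ι] [DecidableEq ι] {E : Type*} [NormedAddCommGroup E] {f : (ι → ℝ) → E}

lemma integrableOn_unitCell_iff (hf : ∀ i, Periodic f (Pi.single i 1)) (c : ι → ℝ) :
    IntegrableOn f (unitCell c) ↔ IntegrableOn f (unitCell 0) :=
  (isAddFundamentalDomain_unitCell c).integrableOn_iff (isAddFundamentalDomain_unitCell 0)
    (apply_unitLattice_vadd hf)

lemma setIntegral_unitCell_eq [NormedSpace ℝ E] (hf : ∀ i, Periodic f (Pi.single i 1))
    (c : ι → ℝ) :
    ∫ x in unitCell c, f x = ∫ x in unitCell 0, f x :=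
  (isAddFundamentalDomain_unitCell c).setIntegral_eq (isAddFundamentalDomain_unitCell 0)
    (apply_unitLattice_vadd hf)

lemma setIntegral_pi_Ico_natCast [NormedSpace ℝ E] (hf : ∀ i, Periodic f (Pi.single i 1))
    (hfi : IntegrableOn f (unitCell 0)) (a : ι → ℝ) (m : ℕ) :
    ∫ x in univ.pi (fun i => Ico (a i) (a i + m)), f x
      = (m : ℝ) ^ Fintype.card ι • ∫ x in unitCell 0, f x := by
  rw [pi_Ico_natCast_eq_iUnion_unitCell, integral_iUnion_fintype (fun _ => measurableSet_unitCell _)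
    (pairwise_disjoint_unitCell_add_natCast a m)
    (fun _ => (integrableOn_unitCell_iff hf _).2 hfi)]
  simp [setIntegral_unitCell_eq hf, ← Nat.cast_smul_eq_nsmul ℝ]

end Periodic

lemma abs_setIntegral_sub_measureReal_mul_le {X : Type*} [MeasurableSpace X] {μ : Measure X}
    {φ : X → ℝ} {M I : ℝ} (hM : ∀ x, |φ x| ≤ M) (hI : |I| ≤ M) {s t : Set X} (hst : s ⊆ t)
    (hs : MeasurableSet s) (ht : μ t < ⊤) (hφt : IntegrableOn φ t μ)
    (hφs : ∫ x in s, φ x ∂μ = μ.real s * I) :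
    |∫ x in t, φ x ∂μ - μ.real t * I| ≤ 2 * M * (μ.real t - μ.real s) := by
  have hμ : μ.real s ≤ μ.real t := measureReal_mono hst ht.ne
  have hrest : |∫ x in t \ s, φ x ∂μ| ≤ M * (μ.real t - μ.real s) := by
    rw [← measureReal_sdiff hst hs ht.ne]
    exact norm_setIntegral_le_of_norm_le_const (f := φ)
      ((measure_mono sdiff_subset).trans_lt ht) fun x _ => hM x
  calc |∫ x in t, φ x ∂μ - μ.real t * I|
      = |∫ x in t \ s, φ x ∂μ - (μ.real t - μ.real s) * I| := by
        rw [setIntegral_sdiff hs hφt hst, hφs]; ring_nf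
    _ ≤ |∫ x in t \ s, φ x ∂μ| + (μ.real t - μ.real s) * |I| :=
        (abs_sub _ _).trans_eq (by rw [abs_mul, abs_of_nonneg (sub_nonneg.2 hμ)])
    _ ≤ M * (μ.real t - μ.real s) + (μ.real t - μ.real s) * M := by gcongr
    _ = 2 * M * (μ.real t - μ.real s) := by ring

lemma volume_pi_Ico_lt_top [Fintype ι] (a b : ι → ℝ) :
    volume (univ.pi fun i => Ico (a i) (b i)) < ⊤ := by
  rw [Real.volume_pi_Ico]
  exact ENNReal.prod_lt_top fun _ _ => ENNReal.ofReal_lt_top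

lemma measureReal_pi_Ico_add [Fintype ι] (a : ι → ℝ) {r : ℝ} (hr : 0 ≤ r) :
    volume.real (univ.pi fun i => Ico (a i) (a i + r)) = r ^ Fintype.card ι := by
  simp [measureReal_def, Real.volume_pi_Ico_toReal (fun i => (le_add_iff_nonneg_right (a i)).2 hr)]

lemma abs_setIntegral_pi_Ico_sub_le [Fintype ι] [DecidableEq ι] {φ : (ι → ℝ) → ℝ}
    (hφ : Measurable φ) (hper : ∀ i, Periodic φ (Pi.single i 1)) {M : ℝ} (hM : ∀ x, |φ x| ≤ M)
    (a : ι → ℝ) {L : ℝ} (hL : 0 ≤ L) :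
    |(∫ x in univ.pi (fun i => Ico (a i) (a i + L)), φ x)
        - L ^ Fintype.card ι * ∫ x in unitCell 0, φ x|
      ≤ 2 * M * (L ^ Fintype.card ι - (⌊L⌋₊ : ℝ) ^ Fintype.card ι) := by
  have hint : ∀ (b : ι → ℝ) (r : ℝ), IntegrableOn φ (univ.pi fun i => Ico (b i) (b i + r)) :=
    fun b r => Measure.integrableOn_of_bounded (volume_pi_Ico_lt_top _ _).ne hφ.aestronglyMeasurable
      (ae_of_all _ hM)
  have hI : |∫ x in unitCell 0, φ x| ≤ M := by
    have h := norm_setIntegral_le_of_norm_le_const (f := φ) (s := unitCell 0)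
      (volume_pi_Ico_lt_top _ _) fun x _ => hM x
    rwa [unitCell, measureReal_pi_Ico_add 0 zero_le_one, one_pow, mul_one] at h
  rw [← measureReal_pi_Ico_add a hL, ← measureReal_pi_Ico_add a (Nat.cast_nonneg ⌊L⌋₊)]
  refine abs_setIntegral_sub_measureReal_mul_le hM hI
    (pi_mono fun i _ => Ico_subset_Ico_right (add_le_add_right (Nat.floor_le hL) (a i)))
    (MeasurableSet.univ_pi fun _ => measurableSet_Ico) (volume_pi_Ico_lt_top a _) (hint a L) ?_
  rw [setIntegral_pi_Ico_natCast hper (hint 0 1) a, measureReal_pi_Ico_add a (Nat.cast_nonneg _),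
    smul_eq_mul]

lemma one_sub_pow_le_mul_one_sub {r : ℝ} (hr : 0 ≤ r) (n : ℕ) : 1 - r ^ n ≤ n * (1 - r) := by
  have := one_add_mul_le_pow (a := r - 1) (by linarith) n
  rw [add_sub_cancel] at this
  linarith

lemma abs_average_pi_Ico_sub_le [Fintype ι] [DecidableEq ι] {φ : (ι → ℝ) → ℝ}
    (hφ : Measurable φ) (hper : ∀ i, Periodic φ (Pi.single i 1)) {M : ℝ} (hM : ∀ x, |φ x| ≤ M)
    (a : ι → ℝ) {L : ℝ} (hL : 0 < L) :
    |(L ^ Fintype.card ι)⁻¹ * (∫ x in univ.pi (fun i => Ico (a i) (a i + L)), φ x)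
        - ∫ x in unitCell 0, φ x|
      ≤ 2 * Fintype.card ι * M / L := by
  set n := Fintype.card ι
  set m : ℝ := (⌊L⌋₊ : ℝ)
  set A := ∫ x in univ.pi (fun i => Ico (a i) (a i + L)), φ x
  set I := ∫ x in unitCell 0, φ x
  have hLn : 0 < L ^ n := pow_pos hL n
  have hM₀ : 0 ≤ M := (abs_nonneg _).trans (hM 0)
  have hm : 1 - m / L ≤ 1 / L := by
    rw [one_sub_div hL.ne', div_le_div_iff_of_pos_right hL]
    linarith [Nat.lt_floor_add_one L]
  calc |(L ^ n)⁻¹ * A - I|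
      = |(L ^ n)⁻¹ * (A - L ^ n * I)| := by rw [mul_sub, inv_mul_cancel_left₀ hLn.ne']
    _ = (L ^ n)⁻¹ * |A - L ^ n * I| := by rw [abs_mul, abs_of_pos (inv_pos.2 hLn)]
    _ ≤ (L ^ n)⁻¹ * (2 * M * (L ^ n - m ^ n)) := by
        gcongr; exact abs_setIntegral_pi_Ico_sub_le hφ hper hM a hL.le
    _ = 2 * M * (1 - (m / L) ^ n) := by rw [div_pow]; field_simp
    _ ≤ 2 * M * (n * (1 / L)) := by
        gcongr
        exact (one_sub_pow_le_mul_one_sub (by positivity) n).trans (by gcongr)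
    _ = 2 * n * M / L := by ring

lemma smul_set_Icc_of_pos {α β : Type*} [GroupWithZero α] [Preorder α] [Preorder β]
    [MulAction α β] [PosSMulMono α β] [PosSMulReflectLE α β] {c : α} (hc : 0 < c) (p q : β) :
    c • Icc p q = Icc (c • p) (c • q) := by
  ext x
  rw [mem_smul_set_iff_inv_smul_mem₀ hc.ne', mem_Icc, mem_Icc, le_inv_smul_iff_of_pos hc,
    inv_smul_le_iff_of_pos hc]

lemma setIntegral_Icc_comp_inv_smul [Fintype ι] (f : (ι → ℝ) → ℝ) {ε : ℝ} (hε : 0 < ε)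
    (p q : ι → ℝ) :
    ∫ x in Icc p q, f (ε⁻¹ • x)
      = ε ^ Fintype.card ι * ∫ x in univ.pi fun i => Ico (ε⁻¹ * p i) (ε⁻¹ * q i), f x := by
  rw [Measure.setIntegral_comp_smul_of_pos _ _ _ (inv_pos.2 hε), smul_set_Icc_of_pos (inv_pos.2 hε),
    Module.finrank_fintype_fun_eq_card, inv_pow, inv_inv, smul_eq_mul]
  exact congrArg (ε ^ Fintype.card ι * ·) (setIntegral_congr_set Measure.univ_pi_Ico_ae_eq_Icc.symm)

/-- Multidimensional averaging lemma (Lemma 3.3 of the paper): there is a constant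
`C > 0`, depending only on the dimension `n`, such that for every bounded measurable
function `φ : ℝⁿ → ℝ` that is 1-periodic in each coordinate direction and bounded by
`M`, every `0 < ε ≤ δ` and every cube `K_δ = x₀ + [0, δ]ⁿ`, the average of `φ (x / ε)`
over `K_δ` differs from the mean of `φ` over the unit cell `[0,1]ⁿ` by at most
`C * M * (ε / δ)`. -/
theorem oscillatory_average_cube (n : ℕ) :
    ∃ C : ℝ, 0 < C ∧
      ∀ (φ : (Fin n → ℝ) → ℝ), Measurable φ →
        (∀ (x : Fin n → ℝ) (i : Fin n), φ (x + Pi.single i 1) = φ x) →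
        ∀ M : ℝ, (∀ x : Fin n → ℝ, |φ x| ≤ M) →
        ∀ ε δ : ℝ, 0 < ε → ε ≤ δ →
        ∀ x₀ : Fin n → ℝ,
          |(δ ^ n)⁻¹ * (∫ x in Set.Icc x₀ (fun i => x₀ i + δ), φ (ε⁻¹ • x)) -
              ∫ y in Set.Icc (0 : Fin n → ℝ) 1, φ y| ≤
            C * M * (ε / δ) := by
  refine ⟨2 * n + 1, by positivity, fun φ hφ hper M hM ε δ hε hεδ x₀ => ?_⟩
  have hδ : 0 < δ := hε.trans_le hεδ
  have hM₀ : 0 ≤ M := (abs_nonneg _).trans (hM 0)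
  have hcube : ∫ x in Icc x₀ (fun i => x₀ i + δ), φ (ε⁻¹ • x)
      = ε ^ n * ∫ x in univ.pi fun i => Ico (ε⁻¹ * x₀ i) (ε⁻¹ * x₀ i + δ / ε), φ x := by
    simp_rw [setIntegral_Icc_comp_inv_smul φ hε, Fintype.card_fin, mul_add, inv_mul_eq_div]
  have hcell : ∫ y in Icc (0 : Fin n → ℝ) 1, φ y = ∫ y in unitCell 0, φ y := by
    rw [unitCell]
    simp only [Pi.zero_apply, zero_add]
    exact setIntegral_congr_set Measure.univ_pi_Ico_ae_eq_Icc.symm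
  have key := abs_average_pi_Ico_sub_le hφ (fun i x => hper x i) hM (fun i => ε⁻¹ * x₀ i)
    (div_pos hδ hε)
  rw [Fintype.card_fin, div_pow, inv_div] at key
  rw [hcube, hcell, ← mul_assoc, inv_mul_eq_div]
  calc _ ≤ 2 * n * M / (δ / ε) := key
    _ = 2 * n * M * (ε / δ) := by field_simp
    _ ≤ (2 * n + 1) * M * (ε / δ) := by gcongr; linarith
end

section
/- Let φ : ℝ → ℝ be a measurable function with period 1 (φ(y + 1) = φ(y) for all y ∈ ℝ) and |φ(y)| ≤ M for all y. Then for every 0 < ε ≤ δ and every a ∈ ℝ, | (1/δ) ∫_a^{a+δ} φ(x/ε) dx − ∫_0^1 φ(y) dy | ≤ 2 M ε / δ. -/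
open MeasureTheory intervalIntegral

/-! The substitution `y = x / ε` turns the average into `ε / δ` times the integral of `φ` over an
interval of length `L = δ / ε`. Cutting that interval into `⌊L⌋` full periods and a remainder of
length `r < 1`, the full periods contribute exactly `⌊L⌋` times the mean of `φ`, so the error is the
integral over the remainder minus `r` times the mean, each of size at most `M r ≤ M`. -/

namespace Function.Periodic

variable {E : Type*} [NormedAddCommGroup E] [NormedSpace ℝ E] {f : ℝ → E} {c : ℝ}

theorem intervalIntegral_add_eq_zsmul_add (hf : Periodic f c)
    (hint : ∀ t₁ t₂, IntervalIntegrable f volume t₁ t₂) (n : ℤ) (b L : ℝ) :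
    ∫ x in b..b + L, f x = n • (∫ x in 0..c, f x) + ∫ x in (b + n • c)..(b + L), f x := by
  rw [← integral_add_adjacent_intervals (hint b (b + n • c)) (hint _ _),
    hf.intervalIntegral_add_zsmul_eq n b hint, hf.intervalIntegral_add_eq b 0, zero_add]

theorem norm_intervalIntegral_sub_smul_le (hf : Periodic f c) (hc : 0 < c)
    (hint : ∀ t₁ t₂, IntervalIntegrable f volume t₁ t₂) {M : ℝ} (hbd : ∀ x, ‖f x‖ ≤ M)
    (b L : ℝ) :
    ‖(∫ x in b..b + L, f x) - (L / c) • ∫ x in 0..c, f x‖ ≤ 2 * M * c := by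
  set n : ℤ := ⌊L / c⌋
  set r : ℝ := L - n * c
  have hr : r = c * Int.fract (L / c) := by
    rw [Int.fract, mul_sub, mul_div_cancel₀ L hc.ne']
    ring
  have hr0 : 0 ≤ r := hr ▸ mul_nonneg hc.le (Int.fract_nonneg _)
  have hrc : r ≤ c := hr ▸ mul_le_of_le_one_right hc.le (Int.fract_lt_one _).le
  have hM : 0 ≤ M := (norm_nonneg _).trans (hbd 0)
  have hperiod : ‖∫ x in 0..c, f x‖ ≤ M * c := by
    simpa [abs_of_pos hc] using norm_integral_le_of_norm_le_const (a := 0) (b := c) fun x _ => hbd x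
  have hrest : ‖∫ x in (b + n • c)..(b + L), f x‖ ≤ M * r := by
    have := norm_integral_le_of_norm_le_const (a := b + n • c) (b := b + L) fun x _ => hbd x
    rw [zsmul_eq_mul] at this ⊢
    rwa [add_sub_add_left_eq_sub, abs_of_nonneg hr0] at this
  have hsplit : (∫ x in b..b + L, f x) - (L / c) • ∫ x in 0..c, f x
      = (∫ x in (b + n • c)..(b + L), f x) - (r / c) • ∫ x in 0..c, f x := by
    have hLc : L / c = n + r / c := by field_simp; ring
    rw [hf.intervalIntegral_add_eq_zsmul_add hint n, hLc, add_smul, ← Int.cast_smul_eq_zsmul ℝ]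
    abel
  calc _ = ‖(∫ x in (b + n • c)..(b + L), f x) - (r / c) • ∫ x in 0..c, f x‖ := by rw [hsplit]
    _ ≤ M * r + r / c * (M * c) := by
        refine (norm_sub_le _ _).trans (add_le_add hrest ?_)
        rw [norm_smul, Real.norm_of_nonneg (by positivity)]
        gcongr
    _ = 2 * M * r := by field_simp; ring
    _ ≤ 2 * M * c := by gcongr

end Function.Periodic

/-- One-dimensional averaging lemma: the mean value of the oscillatory function
`x ↦ φ (x / ε)` over an interval of length `δ` differs from the mean of the
1-periodic bounded function `φ` over one period by at most `2 M ε / δ`. -/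
theorem oscillatory_average_one_dim
    (φ : ℝ → ℝ) (M : ℝ) (hmeas : Measurable φ)
    (hper : ∀ y : ℝ, φ (y + 1) = φ y)
    (hbd : ∀ y : ℝ, |φ y| ≤ M)
    (ε δ a : ℝ) (hε : 0 < ε) (hεδ : ε ≤ δ) :
    |(1 / δ) * (∫ x in a..(a + δ), φ (x / ε)) - ∫ y in (0:ℝ)..1, φ y| ≤
      2 * M * ε / δ := by
  have hδ : 0 < δ := hε.trans_le hεδ
  have hint : ∀ t₁ t₂ : ℝ, IntervalIntegrable φ volume t₁ t₂ := fun _ _ =>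
    (intervalIntegrable_const (c := M)).mono_fun hmeas.aestronglyMeasurable
      (ae_of_all _ fun y => (hbd y).trans (le_abs_self M))
  have hrescale : ∫ x in a..(a + δ), φ (x / ε) = ε * ∫ y in a / ε..a / ε + δ / ε, φ y := by
    rw [integral_comp_div φ hε.ne', add_div, smul_eq_mul]
  have hperiodic := Function.Periodic.norm_intervalIntegral_sub_smul_le hper one_pos hint hbd
    (a / ε) (δ / ε)
  rw [Real.norm_eq_abs, div_one, smul_eq_mul] at hperiodic
  calc _ = ε / δ * |(∫ y in a / ε..a / ε + δ / ε, φ y) - δ / ε * ∫ y in (0:ℝ)..1, φ y| := by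
        rw [← abs_of_pos (div_pos hε hδ), ← abs_mul, hrescale]
        congr 1
        field_simp
    _ ≤ ε / δ * (2 * M * 1) := by gcongr
    _ = 2 * M * ε / δ := by ring
end
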